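/- Let r₁, r₂, r₃ ∈ ℝ³ be constant vectors, s₁, s₂, s₃ ∈ ℝ constants, M_r = Σᵢ sᵢ rᵢ rᵢᵀ, and let γ_Ω, k_Ω > 0. Let R, R̂ : ℝ → SO(3) be differentiable, b_Ω ∈ ℝ³ constant, b̂_Ω : ℝ → ℝ³ differentiable, and Ω : ℝ → ℝ³. Define vᵢ = Rᵀ rᵢ, v̂ᵢ = R̂ᵀ rᵢ, w_Ω = −(k_Ω/2) Σᵢ sᵢ R̂ (vᵢ × v̂ᵢ), b̃_Ω = b_Ω − b̂_Ω, and R̃ = R R̂ᵀ. Suppose Ṙ = R[Ω]_×, R̂' = R̂[Ω + b̃_Ω]_× − [w_Ω]_× R̂, and b̂_Ω' = −(γ_Ω/2) Σᵢ sᵢ (vᵢ × v̂ᵢ). Then the Lyapunov function L₁ = 2‖M_r R̃‖_I + (1/(2γ_Ω))‖b̃_Ω‖² satisfies L̇₁ = −k_Ω ‖vex(P_a(M_r R̃))‖². -/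

import Mathlib

/-!
Differentiating `R̃ = R R̂ᵀ`, the common angular velocity `Ω` cancels and
`d/dt R̃ = -R [b̃_Ω]ₓ R̂ᵀ + R̃ [w_Ω]ₓ`. Traces against skew matrices are dot products with `vex`:
`Tr(A [y]ₓ) = -2 vex(Pₐ A) ⬝ y`. Since `R̂ᵀ M_r R = Σ sᵢ v̂ᵢ vᵢᵀ`, we get
`vex(Pₐ(R̂ᵀ M_r R)) = ½ Σ sᵢ vᵢ × v̂ᵢ`, and conjugating by `R̂ ∈ SO(3)` gives
`vex(Pₐ(M_r R̃)) = ½ R̂ Σ sᵢ vᵢ × v̂ᵢ`, i.e. `w_Ω = -k_Ω vex(Pₐ(M_r R̃))`. The bias term of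
`2‖M_r R̃‖_I` then cancels the derivative of `‖b̃_Ω‖² / (2γ_Ω)`, leaving `-k_Ω ‖vex(Pₐ(M_r R̃))‖²`.
-/

open Matrix

attribute [local instance] Matrix.frobeniusNormedAddCommGroup Matrix.frobeniusNormedSpace

/-- The hat map `[y]ₓ`: the 3×3 skew-symmetric matrix with `[y]ₓ x = y × x`. -/
def hat (y : Fin 3 → ℝ) : Matrix (Fin 3) (Fin 3) ℝ :=
  !![0, -y 2, y 1; y 2, 0, -y 0; -y 1, y 0, 0]

/-- `vex(𝒫ₐ(A)) = ½ [A₃₂ − A₂₃, A₁₃ − A₃₁, A₂₁ − A₁₂]ᵀ`. -/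
noncomputable def vexPa (A : Matrix (Fin 3) (Fin 3) ℝ) : Fin 3 → ℝ :=
  ![(A 2 1 - A 1 2) / 2, (A 0 2 - A 2 0) / 2, (A 1 0 - A 0 1) / 2]

/-- `‖M R‖_I = ¼ Tr(M (I₃ − R))`. -/
noncomputable def normI (M R : Matrix (Fin 3) (Fin 3) ℝ) : ℝ :=
  (M * (1 - R)).trace / 4

attribute [local instance] Matrix.frobeniusNormedRing Matrix.frobeniusNormedAlgebra

theorem hat_transpose (y : Fin 3 → ℝ) : (hat y)ᵀ = -hat y := by
  ext i j; fin_cases i <;> fin_cases j <;> simp [hat]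

theorem hat_add (x y : Fin 3 → ℝ) : hat (x + y) = hat x + hat y := by
  ext i j; fin_cases i <;> fin_cases j <;> simp [hat] <;> ring

theorem hat_mulVec (y x : Fin 3 → ℝ) : hat y *ᵥ x = y ⨯₃ x := by
  ext i; fin_cases i <;> simp [hat, cross_apply, mulVec, dotProduct, Fin.sum_univ_three] <;> ring

theorem trace_mul_hat (A : Matrix (Fin 3) (Fin 3) ℝ) (y : Fin 3 → ℝ) :
    (A * hat y).trace = -2 * (vexPa A ⬝ᵥ y) := by
  simp [trace, mul_apply, Fin.sum_univ_three, hat, vexPa, dotProduct]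
  ring

theorem trace_mul_mul_hat_mul (M A B : Matrix (Fin 3) (Fin 3) ℝ) (y : Fin 3 → ℝ) :
    (M * (A * hat y * B)).trace = -2 * (vexPa (B * M * A) ⬝ᵥ y) := by
  rw [← trace_mul_hat, ← Matrix.mul_assoc, trace_mul_comm]
  simp only [Matrix.mul_assoc]

theorem transpose_mulVec_cross_mulVec (A : Matrix (Fin 3) (Fin 3) ℝ) (a b : Fin 3 → ℝ) :
    Aᵀ *ᵥ ((A *ᵥ a) ⨯₃ (A *ᵥ b)) = A.det • (a ⨯₃ b) := by
  ext i; fin_cases i <;>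
    simp [cross_apply, mulVec, dotProduct, Fin.sum_univ_three, det_fin_three] <;> ring

theorem transpose_mul_hat_mul {Q : Matrix (Fin 3) (Fin 3) ℝ} (hQ : Q * Qᵀ = 1) (hdet : Q.det = 1)
    (y : Fin 3 → ℝ) : Qᵀ * hat y * Q = hat (Qᵀ *ᵥ y) := by
  refine ext_iff_mulVec.2 fun x => ?_
  conv_lhs => rw [← one_mulVec y, ← hQ, ← mulVec_mulVec]
  rw [← mulVec_mulVec, ← mulVec_mulVec, hat_mulVec, hat_mulVec, transpose_mulVec_cross_mulVec,
    hdet, one_smul]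

noncomputable def vexPaLinearMap : Matrix (Fin 3) (Fin 3) ℝ →ₗ[ℝ] Fin 3 → ℝ where
  toFun := vexPa
  map_add' A B := by ext i; fin_cases i <;> simp [vexPa] <;> ring
  map_smul' c A := by ext i; fin_cases i <;> simp [vexPa] <;> ring

theorem vexPaLinearMap_apply (A : Matrix (Fin 3) (Fin 3) ℝ) : vexPaLinearMap A = vexPa A := rfl

theorem vexPa_vecMulVec (a b : Fin 3 → ℝ) : vexPa (vecMulVec a b) = (1 / 2 : ℝ) • b ⨯₃ a := by
  ext i; fin_cases i <;> simp [vexPa, vecMulVec, cross_apply] <;> ring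

theorem transpose_mul_sum_smul_vecMulVec_mul {α ι l m n : Type*} [CommSemiring α] [Fintype ι]
    [Fintype m] (A : Matrix m l α) (B : Matrix m n α) (s : ι → α) (a b : ι → m → α) :
    Aᵀ * (∑ i, s i • vecMulVec (a i) (b i)) * B = ∑ i, s i • vecMulVec (Aᵀ *ᵥ a i) (Bᵀ *ᵥ b i) := by
  simp only [Matrix.mul_sum, Matrix.sum_mul, Matrix.mul_smul, Matrix.smul_mul, mul_vecMulVec,
    vecMulVec_mul, mulVec_transpose]

theorem vexPa_sum_smul_vecMulVec {ι : Type*} [Fintype ι] (s : ι → ℝ) (a b : ι → Fin 3 → ℝ) :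
    vexPa (∑ i, s i • vecMulVec (a i) (b i)) = (1 / 2 : ℝ) • ∑ i, s i • b i ⨯₃ a i := by
  rw [← vexPaLinearMap_apply, map_sum, Finset.smul_sum]
  simp only [map_smul, vexPaLinearMap_apply, vexPa_vecMulVec, smul_comm (s _)]

theorem vexPa_conj {Q : Matrix (Fin 3) (Fin 3) ℝ} (hQ : Q * Qᵀ = 1) (hdet : Q.det = 1)
    (A : Matrix (Fin 3) (Fin 3) ℝ) : vexPa (Q * A * Qᵀ) = Q *ᵥ vexPa A := by
  refine dotProduct_eq _ _ fun y => ?_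
  have h : (Q * A * Qᵀ * hat y).trace = (A * hat (Qᵀ *ᵥ y)).trace := by
    rw [← transpose_mul_hat_mul hQ hdet]
    simp only [Matrix.mul_assoc]
    rw [trace_mul_comm Q]
    simp only [Matrix.mul_assoc]
  rw [trace_mul_hat, trace_mul_hat, dotProduct_mulVec, ← mulVec_transpose, transpose_transpose]
    at h
  linarith

theorem HasDerivAt.matrix_transpose {𝕜 m n : Type*} [NontriviallyNormedField 𝕜] [CompleteSpace 𝕜]
    [Fintype m] [Fintype n] {f : 𝕜 → Matrix m n 𝕜} {f' : Matrix m n 𝕜} {t : 𝕜}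
    (hf : HasDerivAt f f' t) : HasDerivAt (fun t => (f t)ᵀ) f'ᵀ t :=
  (LinearMap.toContinuousLinearMap
    (transposeLinearEquiv m n 𝕜 𝕜).toLinearMap).hasFDerivAt.comp_hasDerivAt t hf

theorem HasDerivAt.dotProduct {𝕜 n : Type*} [NontriviallyNormedField 𝕜] [Fintype n]
    {f g : 𝕜 → n → 𝕜} {f' g' : n → 𝕜} {t : 𝕜}
    (hf : HasDerivAt f f' t) (hg : HasDerivAt g g' t) :
    HasDerivAt (fun t => f t ⬝ᵥ g t) (f' ⬝ᵥ g t + f t ⬝ᵥ g') t := by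
  have h := HasDerivAt.fun_sum fun i (_ : i ∈ Finset.univ) =>
    (hasDerivAt_pi.1 hf i).fun_mul (hasDerivAt_pi.1 hg i)
  unfold _root_.dotProduct
  simpa only [Finset.sum_add_distrib] using h

theorem hasDerivAt_normI (M : Matrix (Fin 3) (Fin 3) ℝ) {f : ℝ → Matrix (Fin 3) (Fin 3) ℝ}
    {f' : Matrix (Fin 3) (Fin 3) ℝ} {t : ℝ} (hf : HasDerivAt f f' t) :
    HasDerivAt (fun t => normI M (f t)) (-(M * f').trace / 4) t := by
  have h := (LinearMap.toContinuousLinearMap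
    ((traceLinearMap (Fin 3) ℝ ℝ).comp (LinearMap.mulLeft ℝ M))).hasFDerivAt.comp_hasDerivAt t hf
  have h' := (h.const_sub M.trace).div_const 4
  simp only [normI, Matrix.mul_sub, Matrix.mul_one, trace_sub]
  exact h'

theorem hasDerivAt_mul_transpose_of_hat {R Rhat : ℝ → Matrix (Fin 3) (Fin 3) ℝ}
    {ω b w : Fin 3 → ℝ} {t : ℝ} (hR : HasDerivAt R (R t * hat ω) t)
    (hRhat : HasDerivAt Rhat (Rhat t * hat (ω + b) - hat w * Rhat t) t) :
    HasDerivAt (fun t => R t * (Rhat t)ᵀ)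
      (-(R t * hat b * (Rhat t)ᵀ) + R t * (Rhat t)ᵀ * hat w) t := by
  refine (hR.fun_mul hRhat.matrix_transpose).congr_deriv ?_
  rw [transpose_sub, transpose_mul, transpose_mul, hat_transpose, hat_transpose, hat_add]
  noncomm_ring

theorem lyapunov_attitude_deriv_general
    (r : Fin 3 → Fin 3 → ℝ) (s : Fin 3 → ℝ)
    (Mr : Matrix (Fin 3) (Fin 3) ℝ)
    (hMr : Mr = ∑ i, s i • vecMulVec (r i) (r i))
    (γΩ kΩ : ℝ) (hγ : 0 < γΩ)
    (R Rhat : ℝ → Matrix (Fin 3) (Fin 3) ℝ)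
    (hRhatSO : ∀ t, (Rhat t)ᵀ * Rhat t = 1 ∧ (Rhat t).det = 1)
    (bΩ : Fin 3 → ℝ) (bhatΩ : ℝ → Fin 3 → ℝ) (Ω : ℝ → Fin 3 → ℝ)
    (v vhat : Fin 3 → ℝ → Fin 3 → ℝ)
    (hv : ∀ i t, v i t = (R t)ᵀ.mulVec (r i))
    (hvhat : ∀ i t, vhat i t = (Rhat t)ᵀ.mulVec (r i))
    (wΩ : ℝ → Fin 3 → ℝ)
    (hwΩ : ∀ t, wΩ t =
      -((kΩ / 2) • ∑ i, s i • (Rhat t).mulVec (crossProduct (v i t) (vhat i t))))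
    (btildeΩ : ℝ → Fin 3 → ℝ) (hbtilde : ∀ t, btildeΩ t = bΩ - bhatΩ t)
    (Rtilde : ℝ → Matrix (Fin 3) (Fin 3) ℝ)
    (hRtilde : ∀ t, Rtilde t = R t * (Rhat t)ᵀ)
    (hR : ∀ t, HasDerivAt R (R t * hat (Ω t)) t)
    (hRhat : ∀ t, HasDerivAt Rhat
      (Rhat t * hat (Ω t + btildeΩ t) - hat (wΩ t) * Rhat t) t)
    (hbhat : ∀ t, HasDerivAt bhatΩ
      (-((γΩ / 2) • ∑ i, s i • crossProduct (v i t) (vhat i t))) t)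
    (L₁ : ℝ → ℝ)
    (hL₁ : ∀ t, L₁ t =
      2 * normI Mr (Rtilde t) + (1 / (2 * γΩ)) * (btildeΩ t ⬝ᵥ btildeΩ t)) :
    ∀ t, HasDerivAt L₁
      (-kΩ * (vexPa (Mr * Rtilde t) ⬝ᵥ vexPa (Mr * Rtilde t))) t := by
  intro t
  simp only [hv, hvhat] at hwΩ hbhat
  obtain rfl : Rtilde = fun t => R t * (Rhat t)ᵀ := funext hRtilde
  obtain rfl : btildeΩ = fun t => bΩ - bhatΩ t := funext hbtilde
  obtain rfl : L₁ = _ := funext hL₁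
  obtain ⟨hRhat_orth, hRhat_det⟩ := hRhatSO t
  replace hRhat_orth := mul_eq_one_comm.mp hRhat_orth
  set c := ∑ i, s i • ((R t)ᵀ *ᵥ r i) ⨯₃ ((Rhat t)ᵀ *ᵥ r i) with hc
  have hvex_body : vexPa ((Rhat t)ᵀ * Mr * R t) = (1 / 2 : ℝ) • c := by
    rw [hMr, transpose_mul_sum_smul_vecMulVec_mul, vexPa_sum_smul_vecMulVec]
  have hvex : vexPa (Mr * (R t * (Rhat t)ᵀ)) = (1 / 2 : ℝ) • Rhat t *ᵥ c := by
    rw [← mulVec_smul, ← hvex_body, ← vexPa_conj hRhat_orth hRhat_det]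
    simp only [← Matrix.mul_assoc, hRhat_orth, Matrix.one_mul]
  have hw : wΩ t = -kΩ • vexPa (Mr * (R t * (Rhat t)ᵀ)) := by
    rw [hwΩ, hvex, hc, mulVec_sum]
    simp only [mulVec_smul]
    module
  have hRtilde' := hasDerivAt_mul_transpose_of_hat (hR t) (hRhat t)
  have hbtilde' : HasDerivAt (fun t => bΩ - bhatΩ t) ((γΩ / 2) • c) t := by
    simpa using (hbhat t).const_sub bΩ
  refine (((hasDerivAt_normI Mr hRtilde').const_mul 2).add
    ((hbtilde'.dotProduct hbtilde').const_mul (1 / (2 * γΩ)))).congr_deriv ?_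
  rw [Matrix.mul_add, trace_add, Matrix.mul_neg, trace_neg, trace_mul_mul_hat_mul, hvex_body,
    ← Matrix.mul_assoc, trace_mul_hat, hw]
  simp only [dotProduct_comm c, smul_dotProduct, dotProduct_smul, smul_eq_mul]
  field_simp
  ring

/-- along the closed-loop attitude/bias estimation dynamics, the
Lyapunov function `L₁ = 2‖M_r R̃‖_I + (1/(2γ_Ω))‖b̃_Ω‖²` satisfies
`L̇₁ = −k_Ω ‖vex(𝒫ₐ(M_r R̃))‖²`. -/
theorem lyapunov_attitude_deriv
    (r : Fin 3 → Fin 3 → ℝ) (s : Fin 3 → ℝ)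
    (Mr : Matrix (Fin 3) (Fin 3) ℝ)
    (hMr : Mr = ∑ i, s i • vecMulVec (r i) (r i))
    (γΩ kΩ : ℝ) (hγ : 0 < γΩ) (hk : 0 < kΩ)
    (R Rhat : ℝ → Matrix (Fin 3) (Fin 3) ℝ)
    (hRSO : ∀ t, (R t)ᵀ * R t = 1 ∧ (R t).det = 1)
    (hRhatSO : ∀ t, (Rhat t)ᵀ * Rhat t = 1 ∧ (Rhat t).det = 1)
    (bΩ : Fin 3 → ℝ) (bhatΩ : ℝ → Fin 3 → ℝ) (Ω : ℝ → Fin 3 → ℝ)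
    (v vhat : Fin 3 → ℝ → Fin 3 → ℝ)
    (hv : ∀ i t, v i t = (R t)ᵀ.mulVec (r i))
    (hvhat : ∀ i t, vhat i t = (Rhat t)ᵀ.mulVec (r i))
    (wΩ : ℝ → Fin 3 → ℝ)
    (hwΩ : ∀ t, wΩ t =
      -((kΩ / 2) • ∑ i, s i • (Rhat t).mulVec (crossProduct (v i t) (vhat i t))))
    (btildeΩ : ℝ → Fin 3 → ℝ) (hbtilde : ∀ t, btildeΩ t = bΩ - bhatΩ t)
    (Rtilde : ℝ → Matrix (Fin 3) (Fin 3) ℝ)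
    (hRtilde : ∀ t, Rtilde t = R t * (Rhat t)ᵀ)
    (hR : ∀ t, HasDerivAt R (R t * hat (Ω t)) t)
    (hRhat : ∀ t, HasDerivAt Rhat
      (Rhat t * hat (Ω t + btildeΩ t) - hat (wΩ t) * Rhat t) t)
    (hbhat : ∀ t, HasDerivAt bhatΩ
      (-((γΩ / 2) • ∑ i, s i • crossProduct (v i t) (vhat i t))) t)
    (L₁ : ℝ → ℝ)
    (hL₁ : ∀ t, L₁ t =
      2 * normI Mr (Rtilde t) + (1 / (2 * γΩ)) * (btildeΩ t ⬝ᵥ btildeΩ t)) :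
    ∀ t, HasDerivAt L₁
      (-kΩ * (vexPa (Mr * Rtilde t) ⬝ᵥ vexPa (Mr * Rtilde t))) t :=
  lyapunov_attitude_deriv_general r s Mr hMr γΩ kΩ hγ R Rhat hRhatSO bΩ bhatΩ Ω v vhat hv hvhat wΩ
    hwΩ btildeΩ hbtilde Rtilde hRtilde hR hRhat hbhat L₁ hL₁
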